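/- For every integer k ≥ 1 and every z ∈ ℂ∖[−1,1], (1/π) ∫_{−1}^{1} log|t−z| · U_k(t)·√(1−t²) dt = (1/2)·Re( (J₊⁻¹(z))^{k+2}/(k+2) − (J₊⁻¹(z))^{k}/k ). -/

import Mathlib

open MeasureTheory Filter Set Polynomial

/-- The inverse Joukowsky transform mapping the slit plane to the unit disk,
`J₊⁻¹(z) = z - (z-1)^{1/2} (z+1)^{1/2}` with principal-branch square roots. -/
noncomputable def Jinv (z : ℂ) : ℂ :=
  z - (z - 1) ^ ((1 : ℂ) / 2) * (z + 1) ^ ((1 : ℂ) / 2)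

/-!
Write `w = J₊⁻¹(z)`. Then `w (z + √(z-1)√(z+1)) = 1`, so `w + w⁻¹ = 2z`. Moreover `|w| < 1`:
`|w| ≤ 1` since the principal roots `√(z-1)`, `√(z+1)` have nonnegative real parts and imaginary
parts of the same sign, and `|w| = 1` would force `z = Re w ∈ [-1, 1]`. Hence
`cos θ - z = -(1 - w e^{iθ})(1 - w e^{-iθ}) / (2w)`, and the Taylor series of `log (1 - ·)` gives
`log |cos θ - z| = -log (2|w|) - ∑_{n ≥ 1} 2 Re (wⁿ) cos (nθ) / n`.
The substitution `t = cos θ` turns `U_k(t) √(1 - t²) dt` into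
`sin ((k+1)θ) sin θ dθ = (cos kθ - cos (k+2)θ) / 2 dθ`, which on `[0, π]` is orthogonal to all
`cos nθ` but `n = k, k + 2`; integrating the series term by term leaves exactly these two terms.
-/

section Jinv

open Complex

lemma cpow_one_div_two_sq (u : ℂ) : (u ^ ((1 : ℂ) / 2)) ^ 2 = u := by
  simp [one_div]

lemma Jinv_mul_add (z : ℂ) :
    Jinv z * (z + (z - 1) ^ ((1 : ℂ) / 2) * (z + 1) ^ ((1 : ℂ) / 2)) = 1 := by
  rw [Jinv]
  linear_combination -((z + 1) ^ ((1 : ℂ) / 2)) ^ 2 * cpow_one_div_two_sq (z - 1)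
    - (z - 1) * cpow_one_div_two_sq (z + 1)

lemma Jinv_ne_zero (z : ℂ) : Jinv z ≠ 0 :=
  left_ne_zero_of_mul_eq_one (Jinv_mul_add z)

lemma Jinv_add_inv (z : ℂ) : Jinv z + (Jinv z)⁻¹ = 2 * z := by
  rw [inv_eq_of_mul_eq_one_right (Jinv_mul_add z), Jinv]
  ring

lemma normSq_sub_mul_le_normSq_add_mul {a b : ℂ} (ha : 0 ≤ a.re) (hb : 0 ≤ b.re)
    (hab : 0 ≤ a.im * b.im) :
    normSq ((a ^ 2 + b ^ 2) / 2 - a * b) ≤ normSq ((a ^ 2 + b ^ 2) / 2 + a * b) := by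
  have key : normSq ((a ^ 2 + b ^ 2) / 2 + a * b) - normSq ((a ^ 2 + b ^ 2) / 2 - a * b)
      = 2 * (normSq a + normSq b) * (a.re * b.re + a.im * b.im) := by
    simp only [normSq_apply, sub_re, sub_im, add_re, add_im, mul_re, mul_im, div_ofNat_re,
      div_ofNat_im, pow_two]
    ring
  have : 0 ≤ 2 * (normSq a + normSq b) * (a.re * b.re + a.im * b.im) :=
    mul_nonneg (mul_nonneg zero_le_two (add_nonneg (normSq_nonneg a) (normSq_nonneg b)))
      (add_nonneg (mul_nonneg ha hb) hab)
  linarith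

lemma norm_Jinv_le_one (z : ℂ) : ‖Jinv z‖ ≤ 1 := by
  set a := (z - 1) ^ ((1 : ℂ) / 2)
  set b := (z + 1) ^ ((1 : ℂ) / 2)
  have hz : z = (a ^ 2 + b ^ 2) / 2 := by
    rw [cpow_one_div_two_sq, cpow_one_div_two_sq]; ring
  have hre (u : ℂ) : 0 ≤ (u ^ ((1 : ℂ) / 2)).re := by
    rw [one_div, cpow_inv_two_re]; positivity
  have him : 0 ≤ a.im * b.im := by
    simp only [a, b, one_div]
    rcases le_or_gt 0 z.im with h | h
    · rw [cpow_inv_two_im_eq_sqrt (by simpa), cpow_inv_two_im_eq_sqrt (by simpa)]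
      positivity
    · rw [cpow_inv_two_im_eq_neg_sqrt (by simpa), cpow_inv_two_im_eq_neg_sqrt (by simpa),
        neg_mul_neg]
      positivity
  have hle : normSq (Jinv z) ≤ normSq (z + a * b) := by
    calc normSq (Jinv z) = normSq ((a ^ 2 + b ^ 2) / 2 - a * b) := by rw [← hz]; rfl
      _ ≤ normSq ((a ^ 2 + b ^ 2) / 2 + a * b) :=
        normSq_sub_mul_le_normSq_add_mul (hre _) (hre _) him
      _ = normSq (z + a * b) := by rw [← hz]
  have hprod : normSq (Jinv z) * normSq (z + a * b) = 1 := by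
    rw [← normSq_mul, Jinv_mul_add, normSq_one]
  have : normSq (Jinv z) ≤ 1 := by nlinarith [normSq_nonneg (Jinv z)]
  rwa [normSq_eq_norm_sq, sq_le_one_iff₀ (norm_nonneg _)] at this

lemma add_inv_eq_two_mul_re {w : ℂ} (hw : ‖w‖ = 1) : w + w⁻¹ = 2 * w.re := by
  rw [inv_def, normSq_eq_norm_sq, hw]
  simpa using add_conj w

lemma norm_Jinv_lt_one {z : ℂ} (hz : z ∉ ofReal '' Icc (-1 : ℝ) 1) : ‖Jinv z‖ < 1 := by
  refine (norm_Jinv_le_one z).lt_of_ne fun h ↦ hz ⟨(Jinv z).re, abs_le.mp ?_, ?_⟩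
  · exact h ▸ abs_re_le_norm _
  · have := Jinv_add_inv z
    rw [add_inv_eq_two_mul_re h] at this
    linear_combination this / 2

end Jinv

section Joukowsky

open Complex

variable {z w : ℂ}

lemma one_sub_mul_exp_ne_zero (hw : ‖w‖ < 1) (θ : ℝ) : 1 - w * exp (θ * I) ≠ 0 := by
  refine sub_ne_zero.mpr fun h ↦ hw.ne ?_
  simpa [norm_exp_ofReal_mul_I] using congrArg norm h.symm

lemma cos_sub_eq_of_add_inv (hw0 : w ≠ 0) (hzw : w + w⁻¹ = 2 * z) (θ : ℝ) :
    (Real.cos θ : ℂ) - z = -((1 - w * exp (θ * I)) * (1 - w * exp (-θ * I))) / (2 * w) := by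
  have hzw' : w ^ 2 + 1 = 2 * z * w := by
    rw [← hzw]; field_simp
  have he : exp (θ * I) * exp (-θ * I) = 1 := by rw [← exp_add]; simp
  rw [eq_div_iff (by simpa), ofReal_cos, cos]
  linear_combination w ^ 2 * he + hzw'

lemma log_norm_cos_sub (hw0 : w ≠ 0) (hw : ‖w‖ < 1) (hzw : w + w⁻¹ = 2 * z) (θ : ℝ) :
    Real.log ‖(Real.cos θ : ℂ) - z‖ = Real.log ‖1 - w * exp (θ * I)‖
      + Real.log ‖1 - w * exp (-θ * I)‖ - Real.log (2 * ‖w‖) := by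
  have h₁ := one_sub_mul_exp_ne_zero hw θ
  have h₂ : 1 - w * exp (-θ * I) ≠ 0 := by simpa using one_sub_mul_exp_ne_zero hw (-θ)
  rw [cos_sub_eq_of_add_inv hw0 hzw, norm_div, norm_neg, norm_mul, norm_mul, Complex.norm_two,
    Real.log_div (by positivity) (by positivity), Real.log_mul (by positivity) (by positivity)]

lemma re_mul_exp_pow_add (w : ℂ) (θ : ℝ) (n : ℕ) :
    ((w * exp (θ * I)) ^ n / n + (w * exp (-θ * I)) ^ n / n).re
      = 2 * (w ^ n).re / n * Real.cos (n * θ) := by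
  have : (w * exp (θ * I)) ^ n / n + (w * exp (-θ * I)) ^ n / n
      = w ^ n * ((2 * Real.cos (n * θ) / n : ℝ) : ℂ) := by
    rw [mul_pow, mul_pow, ← exp_nat_mul, ← exp_nat_mul]
    push_cast
    rw [cos]
    ring_nf
  rw [this, re_mul_ofReal]
  ring

lemma hasSum_re_pow_div_mul_cos (hw : ‖w‖ < 1) (θ : ℝ) :
    HasSum (fun n : ℕ ↦ 2 * (w ^ n).re / n * Real.cos (n * θ))
      (-(Real.log ‖1 - w * exp (θ * I)‖ + Real.log ‖1 - w * exp (-θ * I)‖)) := by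
  have h₁ : ‖w * exp (θ * I)‖ < 1 := by rw [norm_mul, norm_exp]; simpa using hw
  have h₂ : ‖w * exp (-θ * I)‖ < 1 := by rw [norm_mul, norm_exp]; simpa using hw
  convert hasSum_re ((hasSum_taylorSeries_neg_log h₁).add (hasSum_taylorSeries_neg_log h₂)) using 1
  · exact funext fun n ↦ (re_mul_exp_pow_add w θ n).symm
  · simp only [add_re, neg_re, log_re]
    ring

lemma summable_abs_two_mul_re_pow_div (hw : ‖w‖ < 1) :
    Summable fun n : ℕ ↦ |2 * (w ^ n).re / n| := by
  refine .of_nonneg_of_le (fun _ ↦ abs_nonneg _) (fun n ↦ ?_)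
    ((summable_geometric_of_lt_one (norm_nonneg _) hw).mul_left 2)
  rcases n.eq_zero_or_pos with rfl | hn
  · simp
  calc |2 * (w ^ n).re / n| = 2 * |(w ^ n).re| / n := by simp [abs_div]
    _ ≤ 2 * |(w ^ n).re| := div_le_self (by positivity) (by exact_mod_cast hn)
    _ ≤ 2 * ‖w‖ ^ n := by rw [← norm_pow]; gcongr; exact abs_re_le_norm _

lemma hasSum_log_norm_cos_sub (hw0 : w ≠ 0) (hw : ‖w‖ < 1) (hzw : w + w⁻¹ = 2 * z) (θ : ℝ) :
    HasSum (fun n : ℕ ↦ 2 * (w ^ n).re / n * Real.cos (n * θ))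
      (-(Real.log ‖(Real.cos θ : ℂ) - z‖ + Real.log (2 * ‖w‖))) := by
  convert hasSum_re_pow_div_mul_cos hw θ using 1
  rw [log_norm_cos_sub hw0 hw hzw]
  ring

lemma cos_sub_ne_zero (hw0 : w ≠ 0) (hw : ‖w‖ < 1) (hzw : w + w⁻¹ = 2 * z) (θ : ℝ) :
    (Real.cos θ : ℂ) - z ≠ 0 := by
  have : 1 - w * exp (-θ * I) ≠ 0 := by simpa using one_sub_mul_exp_ne_zero hw (-θ)
  rw [cos_sub_eq_of_add_inv hw0 hzw]
  exact div_ne_zero (neg_ne_zero.mpr (mul_ne_zero (one_sub_mul_exp_ne_zero hw θ) this))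
    (mul_ne_zero two_ne_zero hw0)

end Joukowsky

section CosineSeries

open Real

lemma integral_cos_int_mul (j : ℤ) :
    ∫ θ in (0 : ℝ)..π, cos (j * θ) = if j = 0 then π else 0 := by
  split_ifs with hj
  · simp [hj]
  · have hj' : (j : ℝ) ≠ 0 := by exact_mod_cast hj
    rw [intervalIntegral.integral_comp_mul_left cos hj', integral_cos]
    simp [sin_int_mul_pi]

lemma integral_cos_nat_mul_mul_cos_nat_mul (m n : ℕ) :
    ∫ θ in (0 : ℝ)..π, cos (m * θ) * cos (n * θ)
      = (if m = n then π / 2 else 0) + (if m + n = 0 then π / 2 else 0) := by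
  have hprod (θ : ℝ) : cos (m * θ) * cos (n * θ)
      = cos (((m - n : ℤ) : ℝ) * θ) / 2 + cos (((m + n : ℤ) : ℝ) * θ) / 2 := by
    push_cast
    rw [sub_mul, add_mul, cos_sub, cos_add]
    ring
  simp_rw [hprod]
  rw [intervalIntegral.integral_add (Continuous.intervalIntegrable (by fun_prop) _ _)
    (Continuous.intervalIntegrable (by fun_prop) _ _), intervalIntegral.integral_div,
    intervalIntegral.integral_div, integral_cos_int_mul, integral_cos_int_mul]
  congr 1 <;> split_ifs <;> first | (exfalso; omega) | ring

lemma integral_cos_nat_mul_mul_sin_mul_sin {k : ℕ} (hk : 1 ≤ k) (m : ℕ) :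
    ∫ θ in (0 : ℝ)..π, cos (m * θ) * (sin ((k + 1) * θ) * sin θ)
      = (if m = k then π / 4 else 0) - (if m = k + 2 then π / 4 else 0) := by
  have hprod (θ : ℝ) : cos (m * θ) * (sin ((k + 1) * θ) * sin θ)
      = cos (m * θ) * cos (k * θ) / 2 - cos (m * θ) * cos ((k + 2 : ℕ) * θ) / 2 := by
    push_cast
    rw [show (k + 2 : ℝ) * θ = (k + 1) * θ + θ by ring, show (k : ℝ) * θ = (k + 1) * θ - θ by ring,
      cos_add, cos_sub]
    ring
  simp_rw [hprod]
  rw [intervalIntegral.integral_sub (Continuous.intervalIntegrable (by fun_prop) _ _)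
    (Continuous.intervalIntegrable (by fun_prop) _ _), intervalIntegral.integral_div,
    intervalIntegral.integral_div, integral_cos_nat_mul_mul_cos_nat_mul,
    integral_cos_nat_mul_mul_cos_nat_mul]
  split_ifs <;> first | (exfalso; omega) | ring

lemma hasSum_integral_mul_of_hasSum_cos {c : ℕ → ℝ} {f g : ℝ → ℝ} {a b : ℝ}
    (hc : Summable fun n ↦ |c n|) (hf : ∀ θ, HasSum (fun n ↦ c n * cos (n * θ)) (f θ))
    (hg : IntervalIntegrable g volume a b) :
    HasSum (fun n ↦ c n * ∫ θ in a..b, cos (n * θ) * g θ) (∫ θ in a..b, f θ * g θ) := by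
  simp_rw [← intervalIntegral.integral_const_mul, ← mul_assoc]
  refine intervalIntegral.hasSum_integral_of_dominated_convergence (fun n θ ↦ |c n| * |g θ|)
    (fun n ↦ ?_) (fun n ↦ .of_forall fun θ _ ↦ ?_) (.of_forall fun θ _ ↦ hc.mul_right _) ?_
    (.of_forall fun θ _ ↦ (hf θ).mul_right (g θ))
  · exact (Continuous.aestronglyMeasurable (by fun_prop)).mul
      ((intervalIntegrable_iff.mp hg).aestronglyMeasurable)
  · rw [norm_mul, norm_mul, norm_eq_abs, norm_eq_abs, norm_eq_abs]
    gcongr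
    exact mul_le_of_le_one_right (abs_nonneg _) (abs_cos_le_one _)
  · simp_rw [tsum_mul_right]
    exact hg.abs.const_mul _

end CosineSeries

open Real in
lemma integral_log_norm_cos_sub_mul_sin_mul_sin {z w : ℂ} {k : ℕ} (hk : 1 ≤ k) (hw0 : w ≠ 0)
    (hw : ‖w‖ < 1) (hzw : w + w⁻¹ = 2 * z) :
    ∫ θ in (0 : ℝ)..π, log ‖(cos θ : ℂ) - z‖ * (sin ((k + 1) * θ) * sin θ)
      = π / 2 * ((w ^ (k + 2)).re / (k + 2) - (w ^ k).re / k) := by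
  set c : ℕ → ℝ := fun n ↦ 2 * (w ^ n).re / n
  have hc : Summable fun n ↦ |c n| := summable_abs_two_mul_re_pow_div hw
  have hg : Continuous fun θ ↦ sin ((k + 1) * θ) * sin θ := by fun_prop
  have hseries := hasSum_integral_mul_of_hasSum_cos hc (hasSum_log_norm_cos_sub hw0 hw hzw)
    (hg.intervalIntegrable 0 π)
  have hterm (n : ℕ) : c n * ∫ θ in (0 : ℝ)..π, cos (n * θ) * (sin ((k + 1) * θ) * sin θ)
      = (if n = k then c k * (π / 4) else 0) - (if n = k + 2 then c (k + 2) * (π / 4) else 0) := by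
    rw [integral_cos_nat_mul_mul_sin_mul_sin hk]
    split_ifs <;> simp_all
  have hterms := funext hterm ▸ (hasSum_ite_eq k (c k * (π / 4))).sub
    (hasSum_ite_eq (k + 2) (c (k + 2) * (π / 4)))
  have hg0 : ∫ θ in (0 : ℝ)..π, sin ((k + 1) * θ) * sin θ = 0 := by
    simpa [show 0 ≠ k by omega] using integral_cos_nat_mul_mul_sin_mul_sin hk 0
  have hlog : Continuous fun θ : ℝ ↦ log ‖(cos θ : ℂ) - z‖ :=
    .log (by fun_prop) fun θ ↦ norm_ne_zero_iff.mpr (cos_sub_ne_zero hw0 hw hzw θ)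
  have hsplit : (fun θ ↦ -(log ‖(cos θ : ℂ) - z‖ + log (2 * ‖w‖)) * (sin ((k + 1) * θ) * sin θ))
      = fun θ ↦ -(log ‖(cos θ : ℂ) - z‖ * (sin ((k + 1) * θ) * sin θ))
        - log (2 * ‖w‖) * (sin ((k + 1) * θ) * sin θ) := by
    funext θ; ring
  have hlim := hseries.unique hterms
  rw [hsplit, intervalIntegral.integral_sub (Continuous.intervalIntegrable (by fun_prop) _ _)
    (Continuous.intervalIntegrable (by fun_prop) _ _), intervalIntegral.integral_neg,
    intervalIntegral.integral_const_mul, hg0] at hlim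
  simp only [c, Nat.cast_add, Nat.cast_ofNat] at hlim
  linear_combination -hlim

open Real in
lemma integral_mul_chebyshevU_mul_sqrt {G : ℝ → ℝ} (hG : ContinuousOn G (Icc (-1) 1)) (k : ℕ) :
    ∫ t in (-1 : ℝ)..1, G t * ((Chebyshev.U ℝ k).eval t * √(1 - t ^ 2))
      = ∫ θ in (0 : ℝ)..π, G (cos θ) * (sin ((k + 1) * θ) * sin θ) := by
  have hcos : cos '' uIcc 0 π ⊆ Icc (-1) 1 := by
    rintro _ ⟨θ, -, rfl⟩
    exact ⟨neg_one_le_cos θ, cos_le_one θ⟩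
  have hsub := intervalIntegral.integral_comp_mul_deriv'' (f := cos) (f' := fun θ ↦ -sin θ)
    (g := fun t ↦ G t * ((Chebyshev.U ℝ k).eval t * √(1 - t ^ 2))) continuous_cos.continuousOn
    (fun θ _ ↦ (hasDerivAt_cos θ).hasDerivWithinAt) (by fun_prop)
    ((hG.mul (Continuous.continuousOn (by fun_prop))).mono hcos)
  rw [cos_zero, cos_pi] at hsub
  rw [intervalIntegral.integral_symm, ← hsub, ← intervalIntegral.integral_neg]
  refine intervalIntegral.integral_congr fun θ hθ ↦ ?_
  rw [uIcc_of_le pi_pos.le] at hθ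
  have hsqrt : √(1 - cos θ ^ 2) = sin θ := by
    rw [← sin_sq, sqrt_sq (sin_nonneg_of_nonneg_of_le_pi hθ.1 hθ.2)]
  have hU := Chebyshev.U_real_cos θ k
  push_cast at hU
  simp only [Function.comp_apply, hsqrt]
  rw [← hU]
  ring

/-- Log transform of `U_k(t)·√(1-t²)`:
`ℒ[U_k √(1-t²)](z) = ½ Re(J₊⁻¹(z)^{k+2}/(k+2) - J₊⁻¹(z)^{k}/k)` for `k ≥ 1`,
`z ∈ ℂ∖[-1,1]`. -/
theorem log_transform_weighted_chebyshevU_complex (k : ℕ) (hk : 1 ≤ k) (z : ℂ)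
    (hz : z ∉ Complex.ofReal '' Set.Icc (-1 : ℝ) 1) :
    ((1 / Real.pi) *
        ∫ t in (-1 : ℝ)..1,
          Real.log (‖(t : ℂ) - z‖)
            * ((Polynomial.Chebyshev.U ℝ k).eval t * Real.sqrt (1 - t ^ 2)))
      = (1 / 2) * ((Jinv z) ^ (k + 2) / (k + 2) - (Jinv z) ^ k / k).re := by
  have hlog : ContinuousOn (fun t : ℝ ↦ Real.log ‖(t : ℂ) - z‖) (Icc (-1) 1) :=
    .log (by fun_prop) fun t ht ↦ norm_ne_zero_iff.mpr (sub_ne_zero.mpr fun h ↦ hz ⟨t, ht, h⟩)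
  rw [integral_mul_chebyshevU_mul_sqrt hlog k, integral_log_norm_cos_sub_mul_sin_mul_sin hk
    (Jinv_ne_zero z) (norm_Jinv_lt_one hz) (Jinv_add_inv z), Complex.sub_re,
    show (k : ℂ) + 2 = (k + 2 : ℕ) by push_cast; ring, Complex.div_natCast_re,
    Complex.div_natCast_re]
  field_simp
  push_cast
  ring
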